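/- Let Δ ⊂ ℝ^ℓ be a compact convex polytope, p : Δ → ℝ a continuous positive function on the interior, and H : Δ → Sym²(ℝ^ℓ) a continuous map with H(z) positive semidefinite for all z and positive definite for z in the interior of Δ. Then for every convex C² function f on Δ, ∫_Δ ⟨H(z), Hess f(z)⟩ p(z) dz ≥ 0, with equality if and only if f is affine on Δ. -/

import Mathlib

/-!
At an interior point, `⟨H, Hess f⟩` pairs a positive definite matrix with a positive semidefinite
one (convexity of `f` along lines makes `Hess f ≥ 0`). Writing `Hess f = BᵀB`, the pairing is
`∑ₖ bₖᵀ H bₖ` over the rows `bₖ` of `B`, so it is `≥ 0` and vanishes only when `Hess f = 0`.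
The frontier of a convex body is Lebesgue-null, so the integral is that of a continuous
nonnegative function over the open interior, which vanishes iff the integrand does. Finally
`Hess f ≡ 0` on the connected interior makes `f` affine there, hence on
`Δ ⊆ closure (interior Δ)`.
-/

open MeasureTheory
open Filter Topology Set

namespace Matrix

variable {n : Type*} [Fintype n]

lemma sum_sum_mul_conjTranspose_mul_self_apply (M B : Matrix n n ℝ) :
    ∑ r, ∑ s, M r s * (Bᴴ * B) r s = ∑ k, B k ⬝ᵥ (M *ᵥ B k) := by
  simp only [mul_apply, conjTranspose_apply, star_trivial, dotProduct, mulVec, Finset.mul_sum]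
  conv_lhs => enter [2, r]; rw [Finset.sum_comm]
  rw [Finset.sum_comm]
  exact Finset.sum_congr rfl fun k _ => Finset.sum_congr rfl fun r _ =>
    Finset.sum_congr rfl fun s _ => by ring

open scoped MatrixOrder in
lemma PosSemidef.exists_eq_conjTranspose_mul_self {A : Matrix n n ℝ} (hA : A.PosSemidef) :
    ∃ B : Matrix n n ℝ, A = Bᴴ * B := by
  classical
  exact CStarAlgebra.nonneg_iff_eq_star_mul_self.mp hA.nonneg

lemma PosSemidef.sum_sum_mul_apply_nonneg {M A : Matrix n n ℝ} (hM : M.PosSemidef)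
    (hA : A.PosSemidef) : 0 ≤ ∑ r, ∑ s, M r s * A r s := by
  obtain ⟨B, rfl⟩ := hA.exists_eq_conjTranspose_mul_self
  rw [sum_sum_mul_conjTranspose_mul_self_apply]
  exact Finset.sum_nonneg fun k _ => by simpa using hM.dotProduct_mulVec_nonneg (B k)

lemma PosDef.sum_sum_mul_apply_eq_zero_iff {M A : Matrix n n ℝ} (hM : M.PosDef)
    (hA : A.PosSemidef) : ∑ r, ∑ s, M r s * A r s = 0 ↔ A = 0 := by
  refine ⟨fun h => ?_, fun h => by simp [h]⟩
  obtain ⟨B, rfl⟩ := hA.exists_eq_conjTranspose_mul_self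
  rw [sum_sum_mul_conjTranspose_mul_self_apply, Finset.sum_eq_zero_iff_of_nonneg fun k _ => by
    simpa using hM.posSemidef.dotProduct_mulVec_nonneg (B k)] at h
  have hB : B = 0 := funext fun k => by
    by_contra hk
    simpa [(h k (Finset.mem_univ k))] using hM.dotProduct_mulVec_pos hk
  rw [hB, Matrix.mul_zero]

end Matrix

section SecondDerivative

lemma ConvexOn.nonneg_of_hasDerivAt_deriv {S : Set ℝ} {g : ℝ → ℝ} {x a : ℝ}
    (hg : ConvexOn ℝ S g) (hS : S ∈ 𝓝 x) (hd : ∀ y ∈ S, DifferentiableAt ℝ g y)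
    (h : HasDerivAt (deriv g) a x) : 0 ≤ a :=
  h.hasDerivWithinAt.nonneg_of_monotoneOn
    (by simpa using (PerfectSpace.univ_preperfect x (Set.mem_univ x)).nhds_inter hS)
    (hg.monotoneOn_deriv hd)

variable {E F : Type*} [NormedAddCommGroup E] [NormedSpace ℝ E]
  [NormedAddCommGroup F] [NormedSpace ℝ F]

lemma ConvexOn.fderiv_fderiv_apply_self_nonneg {s : Set E} {f : E → ℝ} (hconv : ConvexOn ℝ s f)
    (hf : Differentiable ℝ f) {z : E} (hf' : DifferentiableAt ℝ (fderiv ℝ f) z)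
    (hz : z ∈ interior s) (v : E) : 0 ≤ fderiv ℝ (fderiv ℝ f) z v v := by
  set line : ℝ →ᵃ[ℝ] E := AffineMap.lineMap z (z + v)
  have hline : ∀ t, HasDerivAt line v t := fun t => by
    simpa using AffineMap.hasDerivAt_lineMap (a := z) (b := z + v) (x := t)
  have hline0 : line 0 = z := AffineMap.lineMap_apply_zero _ _
  have hderiv : deriv (f ∘ line) = fun t => fderiv ℝ f (line t) v := funext fun t =>
    ((hf _).hasFDerivAt.comp_hasDerivAt t (hline t)).deriv
  have hsecond : HasDerivAt (deriv (f ∘ line)) (fderiv ℝ (fderiv ℝ f) z v v) 0 := by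
    have hF : HasFDerivAt (fderiv ℝ f) (fderiv ℝ (fderiv ℝ f) z) (line 0) :=
      hline0 ▸ hf'.hasFDerivAt
    rw [hderiv]
    exact (ContinuousLinearMap.apply ℝ ℝ v).hasFDerivAt.comp_hasDerivAt 0
      (hF.comp_hasDerivAt 0 (hline 0))
  refine (hconv.comp_affineMap line).nonneg_of_hasDerivAt_deriv ?_
    (fun t _ => (hf _).comp t (hline t).differentiableAt) hsecond
  have hs : s ∈ 𝓝 (line 0) := hline0.symm ▸ mem_interior_iff_mem_nhds.1 hz
  exact AffineMap.lineMap_continuous.continuousAt.preimage_mem_nhds hs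

lemma IsOpen.exists_clm_eqOn_add_of_fderiv_fderiv_eq_zero {U : Set E} {f : E → F}
    (hU : IsOpen U) (hU' : IsPreconnected U) (hf : DifferentiableOn ℝ f U)
    (hf' : DifferentiableOn ℝ (fderiv ℝ f) U) (h : EqOn (fderiv ℝ (fderiv ℝ f)) 0 U) :
    ∃ (L : E →L[ℝ] F) (c : F), EqOn f (fun x => L x + c) U := by
  obtain ⟨L, hL⟩ := hU.exists_is_const_of_fderiv_eq_zero hU' hf' h
  obtain ⟨c, hc⟩ := hU.exists_eq_add_of_fderiv_eq hU' hf L.differentiableOn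
    fun x hx => by rw [hL x hx, L.fderiv]
  exact ⟨L, c, hc⟩

lemma AffineMap.fderiv_fderiv_eq_zero_of_eqOn [FiniteDimensional ℝ E] (g : E →ᵃ[ℝ] F)
    {f : E → F} {s : Set E} (h : EqOn f g s) {z : E} (hz : z ∈ interior s) :
    fderiv ℝ (fderiv ℝ f) z = 0 := by
  let g' : E →ᴬ[ℝ] F := ⟨g, g.continuous_of_finiteDimensional⟩
  have hev : fderiv ℝ f =ᶠ[𝓝 z] fun _ => g'.contLinear := by
    filter_upwards [isOpen_interior.mem_nhds hz] with w hw
    have hfg : f =ᶠ[𝓝 w] g' := Filter.mem_of_superset (isOpen_interior.mem_nhds hw)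
      fun x hx => h (interior_subset hx)
    rw [hfg.fderiv_eq, g'.fderiv]
  rw [hev.fderiv_eq, fderiv_const_apply]

theorem Convex.forall_fderiv_fderiv_eq_zero_iff_exists_affineMap [FiniteDimensional ℝ E]
    {s : Set E} (hs : Convex ℝ s) (hs' : (interior s).Nonempty) {f : E → F}
    (hf : ContDiff ℝ 2 f) :
    (∀ z ∈ interior s, fderiv ℝ (fderiv ℝ f) z = 0) ↔ ∃ g : E →ᵃ[ℝ] F, ∀ z ∈ s, f z = g z := by
  refine ⟨fun h => ?_, fun ⟨g, hg⟩ z hz => g.fderiv_fderiv_eq_zero_of_eqOn hg hz⟩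
  obtain ⟨L, c, hLc⟩ := isOpen_interior.exists_clm_eqOn_add_of_fderiv_fderiv_eq_zero
    hs.interior.isPreconnected (hf.differentiable (by simp)).differentiableOn
    ((hf.fderiv_right (m := 1) le_rfl).differentiable (by simp)).differentiableOn h
  refine ⟨L.toLinearMap.toAffineMap + AffineMap.const ℝ E c, ?_⟩
  have hsub : s ⊆ closure (interior s) := by
    rw [hs.closure_interior_eq_closure_of_nonempty_interior hs']
    exact subset_closure
  exact hLc.of_subset_closure hf.continuous.continuousOn (by fun_prop) interior_subset hsub

end SecondDerivative

section Hessian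

open Matrix

variable {ι : Type*} [Fintype ι] [DecidableEq ι]

noncomputable def hessianMatrix (f : (ι → ℝ) → ℝ) (z : ι → ℝ) : Matrix ι ι ℝ :=
  LinearMap.toMatrix₂' ℝ (fderiv ℝ (fderiv ℝ f) z).toLinearMap₁₂

lemma hessianMatrix_apply (f : (ι → ℝ) → ℝ) (z : ι → ℝ) (i j : ι) :
    hessianMatrix f z i j = fderiv ℝ (fderiv ℝ f) z (Pi.single i 1) (Pi.single j 1) :=
  rfl

lemma dotProduct_hessianMatrix_mulVec (f : (ι → ℝ) → ℝ) (z x y : ι → ℝ) :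
    x ⬝ᵥ (hessianMatrix f z *ᵥ y) = fderiv ℝ (fderiv ℝ f) z x y := by
  rw [← Matrix.toLinearMap₂'_apply', hessianMatrix, Matrix.toLinearMap₂'_toMatrix']
  rfl

lemma hessianMatrix_eq_zero_iff {f : (ι → ℝ) → ℝ} {z : ι → ℝ} :
    hessianMatrix f z = 0 ↔ fderiv ℝ (fderiv ℝ f) z = 0 := by
  rw [hessianMatrix, LinearEquiv.map_eq_zero_iff, map_eq_zero_iff _
    ContinuousLinearMap.toLinearMap₁₂_injective]

lemma fderiv_apply_single_eq_hessianMatrix {f : (ι → ℝ) → ℝ} {z : ι → ℝ}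
    (hf : DifferentiableAt ℝ (fderiv ℝ f) z) (i j : ι) :
    fderiv ℝ (fun w => fderiv ℝ f w (Pi.single j 1)) z (Pi.single i 1) = hessianMatrix f z i j := by
  rw [fderiv_clm_apply hf (differentiableAt_const _), hessianMatrix_apply]
  simp

lemma ContDiffAt.isHermitian_hessianMatrix {f : (ι → ℝ) → ℝ} {z : ι → ℝ}
    (hf : ContDiffAt ℝ 2 f z) : (hessianMatrix f z).IsHermitian := by
  ext i j
  simpa [hessianMatrix_apply] using
    (hf.isSymmSndFDerivAt (by simp)).eq (Pi.single j 1) (Pi.single i 1)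

lemma ContDiff.continuous_hessianMatrix {f : (ι → ℝ) → ℝ} (hf : ContDiff ℝ 2 f) :
    Continuous (hessianMatrix f) := by
  have h2 : Continuous (fderiv ℝ (fderiv ℝ f)) :=
    (hf.fderiv_right (m := 1) le_rfl).continuous_fderiv (by simp)
  exact continuous_pi fun i => continuous_pi fun j => by
    simp only [hessianMatrix_apply]
    fun_prop

lemma ConvexOn.posSemidef_hessianMatrix {s : Set (ι → ℝ)} {f : (ι → ℝ) → ℝ}
    (hconv : ConvexOn ℝ s f) (hf : ContDiff ℝ 2 f) {z : ι → ℝ} (hz : z ∈ interior s) :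
    (hessianMatrix f z).PosSemidef :=
  .of_dotProduct_mulVec_nonneg hf.contDiffAt.isHermitian_hessianMatrix fun x => by
    simpa [dotProduct_hessianMatrix_mulVec] using hconv.fderiv_fderiv_apply_self_nonneg
      (hf.differentiable (by simp))
      ((hf.fderiv_right (m := 1) le_rfl).differentiable (by simp) z) hz x

end Hessian

lemma IsOpen.setIntegral_eq_zero_iff_eqOn {X : Type*} [TopologicalSpace X] [MeasurableSpace X]
    [OpensMeasurableSpace X] {μ : Measure X} [μ.IsOpenPosMeasure] {U : Set X} {φ : X → ℝ}
    (hU : IsOpen U) (hφc : ContinuousOn φ U) (hφi : IntegrableOn φ U μ)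
    (hφ : ∀ x ∈ U, 0 ≤ φ x) : ∫ x in U, φ x ∂μ = 0 ↔ EqOn φ 0 U := by
  rw [integral_eq_zero_iff_of_nonneg_ae ((ae_restrict_iff' hU.measurableSet).2 (.of_forall hφ))
    hφi]
  exact ⟨fun h => Measure.eqOn_open_of_ae_eq h hU hφc continuousOn_const,
    fun h => (ae_restrict_iff' hU.measurableSet).2 (.of_forall h)⟩

theorem stmt_3_general {ℓ : ℕ} (Δ : Set (Fin ℓ → ℝ)) (hΔc : IsCompact Δ) (hΔconv : Convex ℝ Δ)
    (hΔint : (interior Δ).Nonempty)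
    (p : (Fin ℓ → ℝ) → ℝ) (hp : ContinuousOn p Δ) (hppos : ∀ z ∈ interior Δ, 0 < p z)
    (H : (Fin ℓ → ℝ) → Matrix (Fin ℓ) (Fin ℓ) ℝ) (hHc : ContinuousOn H Δ)
    (hHpsd : ∀ z ∈ Δ, (H z).PosSemidef)
    (hHpd : ∀ z ∈ interior Δ, (H z).PosDef)
    (f : (Fin ℓ → ℝ) → ℝ) (hf : ContDiff ℝ 2 f) (hconv : ConvexOn ℝ Δ f) :
    0 ≤ (∫ z in Δ, (∑ r, ∑ s, H z r s *
        fderiv ℝ (fun w => fderiv ℝ f w (Pi.single s 1)) z (Pi.single r 1)) * p z) ∧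
      ((∫ z in Δ, (∑ r, ∑ s, H z r s *
          fderiv ℝ (fun w => fderiv ℝ f w (Pi.single s 1)) z (Pi.single r 1)) * p z) = 0 ↔
        ∃ g : (Fin ℓ → ℝ) →ᵃ[ℝ] ℝ, ∀ z ∈ Δ, f z = g z) := by
  have hf' : Differentiable ℝ (fderiv ℝ f) :=
    (hf.fderiv_right (m := 1) le_rfl).differentiable (by simp)
  simp only [fderiv_apply_single_eq_hessianMatrix (hf' _)]
  set φ := fun z => (∑ r, ∑ s, H z r s * hessianMatrix f z r s) * p z
  have hφc : ContinuousOn φ Δ := by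
    have := hf.continuous_hessianMatrix
    fun_prop
  have hφ_nonneg : ∀ z ∈ interior Δ, 0 ≤ φ z := fun z hz =>
    mul_nonneg ((hHpsd z (interior_subset hz)).sum_sum_mul_apply_nonneg
      (hconv.posSemidef_hessianMatrix hf hz)) (hppos z hz).le
  have hφ_eq_zero : ∀ z ∈ interior Δ, φ z = 0 ↔ fderiv ℝ (fderiv ℝ f) z = 0 := fun z hz => by
    rw [mul_eq_zero_iff_right (hppos z hz).ne', (hHpd z hz).sum_sum_mul_apply_eq_zero_iff
      (hconv.posSemidef_hessianMatrix hf hz), hessianMatrix_eq_zero_iff]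
  rw [setIntegral_congr_set (interior_ae_eq_of_null_frontier (hΔconv.addHaar_frontier volume)).symm]
  refine ⟨setIntegral_nonneg isOpen_interior.measurableSet hφ_nonneg, ?_⟩
  rw [isOpen_interior.setIntegral_eq_zero_iff_eqOn (hφc.mono interior_subset)
    ((hφc.integrableOn_compact hΔc).mono_set interior_subset) hφ_nonneg,
    ← hΔconv.forall_fderiv_fderiv_eq_zero_iff_exists_affineMap hΔint hf]
  exact forall₂_congr hφ_eq_zero

/-- Let `Δ ⊂ ℝ^ℓ` be a compact convex body, `p` continuous on `Δ` and positive on its interior,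
and `H` a continuous field of symmetric matrices, positive semidefinite on `Δ` and positive
definite on the interior.  Then for every convex `C²` function `f`,
`∫_Δ ⟨H, Hess f⟩ p ≥ 0`, with equality iff `f` is affine on `Δ`. -/
theorem stmt_3 {ℓ : ℕ} (Δ : Set (Fin ℓ → ℝ)) (hΔc : IsCompact Δ) (hΔconv : Convex ℝ Δ)
    (hΔint : (interior Δ).Nonempty)
    (p : (Fin ℓ → ℝ) → ℝ) (hp : ContinuousOn p Δ) (hppos : ∀ z ∈ interior Δ, 0 < p z)
    (H : (Fin ℓ → ℝ) → Matrix (Fin ℓ) (Fin ℓ) ℝ) (hHc : ContinuousOn H Δ)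
    (hHsymm : ∀ z ∈ Δ, (H z).IsSymm)
    (hHpsd : ∀ z ∈ Δ, (H z).PosSemidef)
    (hHpd : ∀ z ∈ interior Δ, (H z).PosDef)
    (f : (Fin ℓ → ℝ) → ℝ) (hf : ContDiff ℝ 2 f) (hconv : ConvexOn ℝ Δ f) :
    0 ≤ (∫ z in Δ, (∑ r, ∑ s, H z r s *
        fderiv ℝ (fun w => fderiv ℝ f w (Pi.single s 1)) z (Pi.single r 1)) * p z) ∧
      ((∫ z in Δ, (∑ r, ∑ s, H z r s *
          fderiv ℝ (fun w => fderiv ℝ f w (Pi.single s 1)) z (Pi.single r 1)) * p z) = 0 ↔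
        ∃ g : (Fin ℓ → ℝ) →ᵃ[ℝ] ℝ, ∀ z ∈ Δ, f z = g z) :=
  stmt_3_general Δ hΔc hΔconv hΔint p hp hppos H hHc hHpsd hHpd f hf hconv
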